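/- A signed measure $\nu$ of finite upper density on $\mathbb{C}$ satisfies the Lindelöf condition $\sup_{r\ge1}\big|\int_{1<|z|\le r} z^{-1}\, d\nu(z)\big| < +\infty$ if and only if its translate $\nu_{\vec w}$ (for any fixed $w \in \mathbb{C}$) satisfies the same condition. -/

import Mathlib

open MeasureTheory Filter

/-- The annulus `{z : r < |z| ≤ R}` in `ℂ`. -/
def annulus (r R : ℝ) : Set ℂ := {z : ℂ | r < ‖z‖ ∧ ‖z‖ ≤ R}

/-- Right logarithmic function of intervals: `∫_{r<|z|≤R} Re⁺(1/z) dν`. -/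
noncomputable def ellP (ν : Measure ℂ) (r R : ℝ) : ℝ :=
  ∫ z in annulus r R, max (1 / z).re 0 ∂ν

/-- Left logarithmic function of intervals: `∫_{r<|z|≤R} Re⁻(1/z) dν`. -/
noncomputable def ellM (ν : Measure ℂ) (r R : ℝ) : ℝ :=
  ∫ z in annulus r R, max (-(1 / z).re) 0 ∂ν

/-- The logarithmic submeasure `ℓ_ν(r,R)`. -/
noncomputable def ell (ν : Measure ℂ) (r R : ℝ) : ℝ := max (ellP ν r R) (ellM ν r R)

/-- Radial counting function `ν^rad(t) = ν(t·𝔻̄)`. -/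
noncomputable def rad (ν : Measure ℂ) (t : ℝ) : ℝ := (ν (Metric.closedBall 0 t)).toReal

/-- Finite upper density: `limsup_{t→∞} ν^rad(t)/t < +∞`. -/
def FiniteUpperDensity (ν : Measure ℂ) : Prop := ∃ C : ℝ, ∀ᶠ t in atTop, rad ν t ≤ C * t

/-- The Lindelöf condition for the signed measure `νp - νm`:
`sup_{r ≥ 1} |∫_{1<|z|≤r} z⁻¹ d(νp - νm)| < +∞`. -/
def LindelofCondition (νp νm : Measure ℂ) : Prop :=
  ∃ C : ℝ, ∀ r ≥ (1 : ℝ),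
    ‖(∫ z in annulus 1 r, z⁻¹ ∂νp) - ∫ z in annulus 1 r, z⁻¹ ∂νm‖ ≤ C

/-!
Translating by `w` turns `∫_{1<|z|≤r} z⁻¹ dν` into `∫ 1_{1<|ζ+w|≤r} (ζ+w)⁻¹ dν(ζ)`. Outside the disc
of radius `2|w| + 1` the two integrands differ by at most `2|w|/|ζ|²` where both are present, and
`∫ |ζ|⁻² dν` converges there by finite upper density (sum over dyadic annuli); where only one is
present, `|ζ|` is within `|w|` of `r`, so that region lies in the disc of radius `r + |w|`, of mass
`O(r)`, and the integrands are `O(1/r)`. So the two Lindelöf integrals differ by a bound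
independent of `r`; the converse follows by translating back by `-w`.
-/

open Metric

lemma measurableSet_annulus (r R : ℝ) : MeasurableSet (annulus r R) :=
  (measurableSet_lt measurable_const measurable_norm).inter
    (measurableSet_le measurable_norm measurable_const)

lemma annulus_subset_closedBall (r R : ℝ) : annulus r R ⊆ closedBall 0 R := fun z hz => by
  simpa using hz.2

lemma annulus_self (R : ℝ) : annulus R R = ∅ :=
  Set.eq_empty_of_forall_notMem fun _ hz => (hz.1.trans_le hz.2).false

lemma annulus_union {a b c : ℝ} (hab : a ≤ b) (hbc : b ≤ c) :
    annulus a b ∪ annulus b c = annulus a c := by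
  ext z
  simp only [annulus, Set.mem_union, Set.mem_ofPred_eq]
  constructor
  · rintro (h | h) <;> constructor <;> linarith [h.1, h.2]
  · intro h
    by_cases hz : ‖z‖ ≤ b
    exacts [Or.inl ⟨h.1, hz⟩, Or.inr ⟨lt_of_not_ge hz, h.2⟩]

lemma disjoint_annulus (a b c : ℝ) : Disjoint (annulus a b) (annulus b c) :=
  Set.disjoint_left.2 fun _ h h' => (h.2.trans_lt h'.1).false

lemma norm_indicator_annulus_inv_le_inv_norm (r : ℝ) (z : ℂ) :
    ‖(annulus 1 r).indicator (fun z : ℂ => z⁻¹) z‖ ≤ ‖z‖⁻¹ := by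
  by_cases hz : z ∈ annulus 1 r
  · simp [hz]
  · simp [hz]

lemma norm_indicator_annulus_inv_le_one (r : ℝ) (z : ℂ) :
    ‖(annulus 1 r).indicator (fun z : ℂ => z⁻¹) z‖ ≤ 1 := by
  by_cases hz : z ∈ annulus 1 r
  · simpa [hz] using inv_le_one_of_one_le₀ hz.1.le
  · simp [hz]

lemma norm_le_norm_add_add_norm {E : Type*} [SeminormedAddCommGroup E] (ζ w : E) :
    ‖ζ‖ ≤ ‖ζ + w‖ + ‖w‖ := by
  simpa using norm_sub_le (ζ + w) w

lemma norm_inv_add_sub_inv_le {ζ w : ℂ} (h : 2 * ‖w‖ < ‖ζ‖) :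
    ‖(ζ + w)⁻¹ - ζ⁻¹‖ ≤ 2 * ‖w‖ * ‖ζ‖⁻¹ ^ 2 := by
  have hζ : 0 < ‖ζ‖ := (mul_nonneg zero_le_two (norm_nonneg w)).trans_lt h
  have hζw : ‖ζ‖ / 2 ≤ ‖ζ + w‖ := by linarith [norm_le_norm_add_add_norm ζ w]
  have hζw0 : ζ + w ≠ 0 := norm_pos_iff.1 (by linarith)
  rw [inv_sub_inv hζw0 (norm_pos_iff.1 hζ), sub_add_cancel_left, norm_div, norm_mul, norm_neg,
    div_le_iff₀ (by positivity)]
  calc ‖w‖ = 2 * ‖w‖ * ‖ζ‖⁻¹ ^ 2 * (‖ζ‖ * (‖ζ‖ / 2)) := by field_simp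
    _ ≤ 2 * ‖w‖ * ‖ζ‖⁻¹ ^ 2 * (‖ζ + w‖ * ‖ζ‖) := by
      rw [mul_comm ‖ζ + w‖]; gcongr

lemma norm_indicator_annulus_inv_add_sub_le {w : ℂ} {R r : ℝ} (hR : 2 * ‖w‖ + 1 ≤ R)
    (hr : 0 < r) (ζ : ℂ) :
    ‖(annulus 1 r).indicator (fun z : ℂ => z⁻¹) (ζ + w)
        - (annulus 1 r).indicator (fun z : ℂ => z⁻¹) ζ‖ ≤
      (closedBall 0 R).indicator (fun _ => 2) ζ
        + (annulus R r).indicator (fun z => 2 * ‖w‖ * ‖z‖⁻¹ ^ 2) ζ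
        + (closedBall 0 (r + ‖w‖)).indicator (fun _ => 4 / r) ζ := by
  set F := (annulus 1 r).indicator (fun z : ℂ => z⁻¹)
  have hball : 0 ≤ (closedBall 0 R).indicator (fun _ => (2 : ℝ)) ζ :=
    Set.indicator_nonneg (fun _ _ => zero_le_two) ζ
  have hann : 0 ≤ (annulus R r).indicator (fun z => 2 * ‖w‖ * ‖z‖⁻¹ ^ 2) ζ :=
    Set.indicator_nonneg (fun _ _ => by positivity) ζ
  have hfar : 0 ≤ (closedBall 0 (r + ‖w‖)).indicator (fun _ => 4 / r) ζ :=
    Set.indicator_nonneg (fun _ _ => by positivity) ζ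
  have hζw := norm_le_norm_add_add_norm ζ w
  have hζw' := norm_add_le ζ w
  rcases le_or_gt ‖ζ‖ R with hζR | hζR
  · have hF : ‖F (ζ + w) - F ζ‖ ≤ 2 := by
      linarith [norm_sub_le (F (ζ + w)) (F ζ), norm_indicator_annulus_inv_le_one r (ζ + w),
        norm_indicator_annulus_inv_le_one r ζ]
    rw [Set.indicator_of_mem (by simpa using hζR)]
    linarith
  rw [Set.indicator_of_notMem (by simpa using hζR), zero_add]
  by_cases hin : ‖ζ‖ ≤ r ∧ ‖ζ + w‖ ≤ r
  · have hζ : ζ ∈ annulus 1 r := ⟨by linarith, hin.1⟩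
    have hζw₁ : ζ + w ∈ annulus 1 r := ⟨by linarith, hin.2⟩
    rw [Set.indicator_of_mem (show ζ ∈ annulus R r from ⟨hζR, hin.1⟩)]
    simp only [F, Set.indicator_of_mem hζ, Set.indicator_of_mem hζw₁]
    linarith [norm_inv_add_sub_inv_le (w := w) (ζ := ζ) (by linarith)]
  rcases lt_or_ge (r + ‖w‖) ‖ζ‖ with hζr | hζr
  · have hζ : ζ ∉ annulus 1 r := fun h => by linarith [h.2]
    have hζw₁ : ζ + w ∉ annulus 1 r := fun h => by linarith [h.2]
    simp only [F, Set.indicator_of_notMem hζ, Set.indicator_of_notMem hζw₁, sub_zero, norm_zero]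
    positivity
  -- exactly one of `ζ`, `ζ + w` lies in the annulus, so both are near the circle `‖z‖ = r`
  rw [not_and_or, not_le, not_le] at hin
  have hr₁ : r / 2 ≤ ‖ζ‖ := by rcases hin with h | h <;> linarith
  have hr₂ : r / 2 ≤ ‖ζ + w‖ := by rcases hin with h | h <;> linarith
  have hinv : ∀ z : ℂ, r / 2 ≤ ‖z‖ → ‖F z‖ ≤ 2 / r := fun z hz =>
    (norm_indicator_annulus_inv_le_inv_norm r z).trans
      (by simpa [inv_div] using inv_anti₀ (by positivity) hz)
  rw [Set.indicator_of_mem (s := closedBall 0 (r + ‖w‖)) (by simpa using hζr)]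
  linarith [norm_sub_le (F (ζ + w)) (F ζ), hinv _ hr₁, hinv _ hr₂,
    show 2 / r + 2 / r = 4 / r by ring]

section
variable {ν : Measure ℂ} [IsFiniteMeasureOnCompacts ν]

instance isFiniteMeasureOnCompacts_map_add (w : ℂ) :
    IsFiniteMeasureOnCompacts (ν.map (· + w)) :=
  Measure.IsFiniteMeasureOnCompacts.map ν (Homeomorph.addRight w)

lemma measureReal_le_rad {S : Set ℂ} {R : ℝ} (h : S ⊆ closedBall 0 R) : ν.real S ≤ rad ν R :=
  measureReal_mono h measure_closedBall_lt_top.ne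

lemma rad_mono : Monotone (rad ν) := fun _ _ h =>
  measureReal_le_rad (closedBall_subset_closedBall h)

lemma FiniteUpperDensity.exists_rad_le (h : FiniteUpperDensity ν) :
    ∃ C, 0 ≤ C ∧ ∀ t ≥ 1, rad ν t ≤ C * t := by
  obtain ⟨C, hC⟩ := h
  obtain ⟨t₀, hC⟩ := eventually_atTop.1 hC
  have hrad : 0 ≤ rad ν (max t₀ 1) := measureReal_nonneg
  refine ⟨max C 0 + rad ν (max t₀ 1), by positivity, fun t ht => ?_⟩
  rcases le_total t (max t₀ 1) with htt₀ | htt₀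
  · nlinarith [rad_mono (ν := ν) htt₀, le_max_right C 0]
  · nlinarith [hC t (le_of_max_le_left htt₀), le_max_left C 0, le_max_right C 0]

lemma FiniteUpperDensity.map_add (h : FiniteUpperDensity ν) (w : ℂ) :
    FiniteUpperDensity (ν.map (· + w)) := by
  obtain ⟨C, hC₀, hC⟩ := h.exists_rad_le
  refine ⟨C * (1 + ‖w‖), eventually_atTop.2 ⟨1, fun t ht => ?_⟩⟩
  have hpre : (· + w) ⁻¹' closedBall 0 t ⊆ closedBall (0 : ℂ) (t + ‖w‖) := fun ζ hζ => by
    simp only [Set.mem_preimage, mem_closedBall_zero_iff] at hζ ⊢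
    linarith [norm_le_norm_add_add_norm ζ w]
  calc rad (ν.map (· + w)) t = ν.real ((· + w) ⁻¹' closedBall 0 t) := by
        rw [rad, measureReal_def,
          Measure.map_apply (measurable_add_const w) measurableSet_closedBall]
    _ ≤ C * (t + ‖w‖) := (measureReal_le_rad hpre).trans (hC _ (by linarith [norm_nonneg w]))
    _ ≤ C * (1 + ‖w‖) * t := by nlinarith [mul_nonneg hC₀ (norm_nonneg w)]

lemma inv_norm_sq_le_of_mem_annulus {R r : ℝ} (hR : 0 < R) {z : ℂ} (hz : z ∈ annulus R r) :
    ‖‖z‖⁻¹ ^ 2‖ ≤ R⁻¹ ^ 2 := by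
  rw [Real.norm_of_nonneg (by positivity)]
  exact pow_le_pow_left₀ (by positivity) (inv_anti₀ hR hz.1.le) 2

lemma integrableOn_annulus_inv_sq {R : ℝ} (hR : 0 < R) (r : ℝ) :
    IntegrableOn (fun z : ℂ => ‖z‖⁻¹ ^ 2) (annulus R r) ν := by
  refine IntegrableOn.of_bound ((measure_mono (annulus_subset_closedBall R r)).trans_lt
    measure_closedBall_lt_top) (by fun_prop) (R⁻¹ ^ 2) ?_
  exact (ae_restrict_iff' (measurableSet_annulus R r)).2
    (ae_of_all _ fun _ => inv_norm_sq_le_of_mem_annulus hR)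

lemma setIntegral_annulus_inv_sq_le_rad {R : ℝ} (hR : 0 < R) (r : ℝ) :
    ∫ z in annulus R r, ‖z‖⁻¹ ^ 2 ∂ν ≤ R⁻¹ ^ 2 * rad ν r := by
  calc ∫ z in annulus R r, ‖z‖⁻¹ ^ 2 ∂ν
      ≤ R⁻¹ ^ 2 * ν.real (annulus R r) := (Real.le_norm_self _).trans
        (norm_setIntegral_le_of_norm_le_const
          ((measure_mono (annulus_subset_closedBall R r)).trans_lt measure_closedBall_lt_top)
          fun _ => inv_norm_sq_le_of_mem_annulus hR)
    _ ≤ R⁻¹ ^ 2 * rad ν r := by gcongr; exact measureReal_le_rad (annulus_subset_closedBall R r)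

lemma setIntegral_annulus_inv_sq_add {a b c : ℝ} (ha : 0 < a) (hab : a ≤ b) (hbc : b ≤ c) :
    ∫ z in annulus a c, ‖z‖⁻¹ ^ 2 ∂ν =
      (∫ z in annulus a b, ‖z‖⁻¹ ^ 2 ∂ν) + ∫ z in annulus b c, ‖z‖⁻¹ ^ 2 ∂ν := by
  rw [← annulus_union hab hbc, setIntegral_union (disjoint_annulus a b c)
    (measurableSet_annulus b c) (integrableOn_annulus_inv_sq ha b)
    (integrableOn_annulus_inv_sq (ha.trans_le hab) c)]

/-- The dyadic annulus `2ⁿR < ‖z‖ ≤ 2ⁿ⁺¹R` contributes at most `2C / (2ⁿR)`. -/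
lemma setIntegral_annulus_inv_sq_le {C R : ℝ} (hR : 0 < R) (hC : ∀ t ≥ R, rad ν t ≤ C * t)
    (r : ℝ) : ∫ z in annulus R r, ‖z‖⁻¹ ^ 2 ∂ν ≤ 4 * C / R := by
  have hC₀ : 0 ≤ C := nonneg_of_mul_nonneg_left ((measureReal_nonneg).trans (hC R le_rfl)) hR
  have hdyadic : ∀ n : ℕ, (∫ z in annulus R (2 ^ n * R), ‖z‖⁻¹ ^ 2 ∂ν) + 4 * C / (2 ^ n * R)
      ≤ 4 * C / R := by
    intro n
    induction n with
    | zero => simp [annulus_self]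
    | succ n ih =>
      have ha : R ≤ 2 ^ n * R := le_mul_of_one_le_left hR.le (one_le_pow₀ one_le_two)
      have hblock := setIntegral_annulus_inv_sq_le_rad (ν := ν) (hR.trans_le ha) (2 ^ (n + 1) * R)
      have hrad := hC (2 ^ (n + 1) * R) (by rw [pow_succ]; nlinarith)
      rw [setIntegral_annulus_inv_sq_add hR ha (by rw [pow_succ]; nlinarith)]
      have h2n : (0 : ℝ) < 2 ^ n := by positivity
      have : (2 ^ n * R)⁻¹ ^ 2 * (C * (2 ^ (n + 1) * R)) + 4 * C / (2 ^ (n + 1) * R) =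
          4 * C / (2 ^ n * R) := by field_simp; ring
      nlinarith [mul_le_mul_of_nonneg_left hrad (by positivity : (0 : ℝ) ≤ (2 ^ n * R)⁻¹ ^ 2)]
  obtain ⟨n, hn⟩ := pow_unbounded_of_one_lt (r / R) one_lt_two
  calc ∫ z in annulus R r, ‖z‖⁻¹ ^ 2 ∂ν ≤ ∫ z in annulus R (2 ^ n * R), ‖z‖⁻¹ ^ 2 ∂ν := by
        refine setIntegral_mono_set (integrableOn_annulus_inv_sq hR _)
          (ae_of_all _ fun z => by positivity) (Eventually.of_forall fun z hz => ?_)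
        exact ⟨hz.1, hz.2.trans (by rw [div_lt_iff₀ hR] at hn; linarith)⟩
    _ ≤ 4 * C / R := by
        have : 0 ≤ 4 * C / (2 ^ n * R) := by positivity
        linarith [hdyadic n]

end

lemma setIntegral_annulus_inv_map_add (ν : Measure ℂ) (w : ℂ) (r : ℝ) :
    ∫ z in annulus 1 r, z⁻¹ ∂(ν.map (· + w)) =
      ∫ ζ, (annulus 1 r).indicator (fun z : ℂ => z⁻¹) (ζ + w) ∂ν := by
  rw [← integral_indicator (measurableSet_annulus 1 r)]
  exact (MeasurableEquiv.addRight w).measurableEmbedding.integral_map _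

section
variable {ν : Measure ℂ} [IsFiniteMeasureOnCompacts ν]

lemma integrable_indicator_annulus_inv (r : ℝ) :
    Integrable ((annulus 1 r).indicator (fun z : ℂ => z⁻¹)) ν := by
  refine (IntegrableOn.of_bound ((measure_mono (annulus_subset_closedBall 1 r)).trans_lt
    measure_closedBall_lt_top) (by fun_prop) 1 ?_).integrable_indicator (measurableSet_annulus 1 r)
  refine (ae_restrict_iff' (measurableSet_annulus 1 r)).2 (ae_of_all _ fun z hz => ?_)
  simpa [norm_inv] using inv_le_one_of_one_le₀ hz.1.le

lemma integrable_indicator_annulus_inv_comp_add (r : ℝ) (w : ℂ) :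
    Integrable (fun ζ => (annulus 1 r).indicator (fun z : ℂ => z⁻¹) (ζ + w)) ν :=
  (MeasurableEquiv.addRight w).measurableEmbedding.integrable_map_iff.1
    (integrable_indicator_annulus_inv (ν := ν.map (· + w)) r)

lemma norm_integral_indicator_annulus_inv_add_sub_le {w : ℂ} {R r : ℝ} (hR : 2 * ‖w‖ + 1 ≤ R)
    (hr : 0 < r) :
    ‖∫ ζ, ((annulus 1 r).indicator (fun z : ℂ => z⁻¹) (ζ + w)
        - (annulus 1 r).indicator (fun z : ℂ => z⁻¹) ζ) ∂ν‖ ≤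
      2 * rad ν R + 2 * ‖w‖ * ∫ z in annulus R r, ‖z‖⁻¹ ^ 2 ∂ν
        + 4 / r * rad ν (r + ‖w‖) := by
  have hR₀ : 0 < R := by linarith [norm_nonneg w]
  have hball : ∀ t c, Integrable ((closedBall (0 : ℂ) t).indicator fun _ => (c : ℝ)) ν :=
    fun t c => (integrableOn_const measure_closedBall_lt_top.ne).integrable_indicator
      measurableSet_closedBall
  have hann : Integrable ((annulus R r).indicator fun z : ℂ => 2 * ‖w‖ * ‖z‖⁻¹ ^ 2) ν :=
    (integrable_indicator_iff (measurableSet_annulus R r)).2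
      ((integrableOn_annulus_inv_sq hR₀ r).const_mul _)
  calc _ ≤ ∫ ζ, ‖(annulus 1 r).indicator (fun z : ℂ => z⁻¹) (ζ + w)
        - (annulus 1 r).indicator (fun z : ℂ => z⁻¹) ζ‖ ∂ν := norm_integral_le_integral_norm _
    _ ≤ ∫ ζ, ((closedBall 0 R).indicator (fun _ => 2) ζ
          + (annulus R r).indicator (fun z => 2 * ‖w‖ * ‖z‖⁻¹ ^ 2) ζ
          + (closedBall 0 (r + ‖w‖)).indicator (fun _ => 4 / r) ζ) ∂ν :=
        integral_mono_of_nonneg (ae_of_all _ fun _ => norm_nonneg _)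
          (((hball R 2).add hann).add (hball _ _))
          (ae_of_all _ (norm_indicator_annulus_inv_add_sub_le hR hr))
    _ = 2 * rad ν R + 2 * ‖w‖ * ∫ z in annulus R r, ‖z‖⁻¹ ^ 2 ∂ν + 4 / r * rad ν (r + ‖w‖) := by
        rw [integral_add ?_ (hball _ _), integral_add (hball R 2) hann,
          integral_indicator_const _ measurableSet_closedBall,
          integral_indicator_const _ measurableSet_closedBall,
          integral_indicator (measurableSet_annulus R r), integral_const_mul, smul_eq_mul,
          smul_eq_mul, mul_comm, mul_comm (ν.real _)]
        · rfl
        · exact (hball R 2).add hann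

end

lemma FiniteUpperDensity.exists_norm_setIntegral_inv_map_add_sub_le {ν : Measure ℂ}
    [IsFiniteMeasureOnCompacts ν] (h : FiniteUpperDensity ν) (w : ℂ) :
    ∃ C, ∀ r ≥ (1 : ℝ),
      ‖(∫ z in annulus 1 r, z⁻¹ ∂(ν.map (· + w))) - ∫ z in annulus 1 r, z⁻¹ ∂ν‖ ≤ C := by
  obtain ⟨C, hC₀, hC⟩ := h.exists_rad_le
  set R := 2 * ‖w‖ + 1
  have hR : 1 ≤ R := by linarith [norm_nonneg w]
  refine ⟨2 * rad ν R + 2 * ‖w‖ * (4 * C / R) + 4 * C * (1 + ‖w‖), fun r hr => ?_⟩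
  have hr₀ : 0 < r := by linarith
  rw [setIntegral_annulus_inv_map_add, ← integral_indicator (measurableSet_annulus 1 r),
    ← integral_sub (integrable_indicator_annulus_inv_comp_add r w)
      (integrable_indicator_annulus_inv r)]
  refine (norm_integral_indicator_annulus_inv_add_sub_le le_rfl hr₀).trans ?_
  have hnear := setIntegral_annulus_inv_sq_le (ν := ν) (by linarith)
    (fun t ht => hC t (hR.trans ht)) r
  have hfar : 4 / r * rad ν (r + ‖w‖) ≤ 4 * C * (1 + ‖w‖) := by
    rw [div_mul_eq_mul_div, div_le_iff₀ hr₀]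
    nlinarith [hC (r + ‖w‖) (by linarith [norm_nonneg w]), mul_nonneg hC₀ (norm_nonneg w)]
  linarith [mul_le_mul_of_nonneg_left hnear (by positivity : 0 ≤ 2 * ‖w‖)]

lemma LindelofCondition.map_add {νp νm : Measure ℂ}
    [IsFiniteMeasureOnCompacts νp] [IsFiniteMeasureOnCompacts νm]
    (hp : FiniteUpperDensity νp) (hm : FiniteUpperDensity νm) (w : ℂ)
    (h : LindelofCondition νp νm) :
    LindelofCondition (νp.map (· + w)) (νm.map (· + w)) := by
  obtain ⟨C, hC⟩ := h
  obtain ⟨Cp, hCp⟩ := hp.exists_norm_setIntegral_inv_map_add_sub_le w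
  obtain ⟨Cm, hCm⟩ := hm.exists_norm_setIntegral_inv_map_add_sub_le w
  refine ⟨Cp + Cm + C, fun r hr => ?_⟩
  set Ip := ∫ z in annulus 1 r, z⁻¹ ∂νp
  set Im := ∫ z in annulus 1 r, z⁻¹ ∂νm
  set Ip' := ∫ z in annulus 1 r, z⁻¹ ∂(νp.map (· + w))
  set Im' := ∫ z in annulus 1 r, z⁻¹ ∂(νm.map (· + w))
  calc ‖Ip' - Im'‖ = ‖(Ip' - Ip) - (Im' - Im) + (Ip - Im)‖ := by congr 1; abel
    _ ≤ ‖Ip' - Ip‖ + ‖Im' - Im‖ + ‖Ip - Im‖ :=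
      (norm_add_le _ _).trans (add_le_add_left (norm_sub_le _ _) _)
    _ ≤ Cp + Cm + C := add_le_add (add_le_add (hCp r hr) (hCm r hr)) (hC r hr)

lemma map_add_neg_map_add (ν : Measure ℂ) (w : ℂ) :
    (ν.map (· + w)).map (· + -w) = ν := by
  rw [Measure.map_map (measurable_add_const _) (measurable_add_const _)]
  simp [Function.comp_def]

/-- A signed measure `ν = νp - νm` of finite upper density
satisfies the Lindelöf condition iff its translate by any fixed `w ∈ ℂ`
does. -/
theorem stmt10 (νp νm : Measure ℂ)
    [IsFiniteMeasureOnCompacts νp] [IsFiniteMeasureOnCompacts νm]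
    (hp : FiniteUpperDensity νp) (hm : FiniteUpperDensity νm) (w : ℂ) :
    LindelofCondition νp νm ↔
      LindelofCondition (Measure.map (· + w) νp) (Measure.map (· + w) νm) := by
  refine ⟨LindelofCondition.map_add hp hm w, fun h => ?_⟩
  simpa only [map_add_neg_map_add] using
    h.map_add (hp.map_add w) (hm.map_add w) (-w)
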